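/- arXiv:1710.10187 — 10 statements merged into one kernel-verified Lean document; each statement's English description precedes it below -/
import Mathlib

section
/- Let X be a real Banach space and Φ : X → ℝ ∪ {+∞} a proper, lower semicontinuous, convex function. For x ∈ dom Φ, ε ≥ 0, and v ∈ X, define the directional ε-derivative Φ'_ε(x; v) := inf_{t>0} (Φ(x + t v) − Φ(x) + ε)/t. Then for fixed x ∈ dom Φ and v ∈ X, the function ε ↦ Φ'_ε(x; v) is non-decreasing and right-continuous on [0, ∞), and moreover continuous at every ε₀ > 0 where its value is finite. -/
open Set Topology Filter

/-!
With `q(t) = (Φ(x + t • v) - Φ(x)) / t`, the ε-derivative is `ε ↦ inf_{t>0} (q(t) + ε / t)`, an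
infimum of continuous nondecreasing functions of `ε`. It is therefore nondecreasing and upper
semicontinuous, which together give right continuity. For left continuity at `ε₀ > 0`, lower
semicontinuity of `Φ` at `x` gives `q(t) ≥ -(ε₀ / 4) / t` for small `t`, so the terms with `t` below
some `τ > 0` stay large for `ε` near `ε₀`, while each term with `t ≥ τ` moves by at most
`|ε - ε₀| / τ`.
-/

/-- Directional ε-derivative `Φ'_ε(x;v) = inf_{t>0} (Φ(x+tv) − Φ(x) + ε)/t`, where
`c = Φ(x)` is the (finite) real value of `Φ` at `x`. -/
noncomputable def dirDeriv {X : Type*} [NormedAddCommGroup X] [NormedSpace ℝ X]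
    (Φ : X → EReal) (x v : X) (c : ℝ) (ε : ℝ) : EReal :=
  ⨅ t ∈ Set.Ioi (0 : ℝ), (((t⁻¹ : ℝ) : EReal) * Φ (x + t • v) + (((ε - c) / t : ℝ) : EReal))

theorem Monotone.continuousWithinAt_Ici_of_upperSemicontinuousAt {α β : Type*}
    [TopologicalSpace α] [Preorder α] [LinearOrder β] [TopologicalSpace β] [OrderTopology β]
    {f : α → β} {a : α} (hf : Monotone f) (hfa : UpperSemicontinuousAt f a) :
    ContinuousWithinAt f (Ici a) a :=
  tendsto_order.2 ⟨fun _ hb => eventually_nhdsWithin_of_forall fun _ hε => hb.trans_le (hf hε),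
    fun b hb => nhdsWithin_le_nhds (hfa b hb)⟩

theorem EReal.continuous_const_add_coe (a : EReal) {f : ℝ → ℝ} (hf : Continuous f) :
    Continuous fun s => a + (f s : EReal) :=
  continuous_iff_continuousAt.2 fun _ =>
    (EReal.continuousAt_add (.inr (EReal.coe_ne_bot _)) (.inr (EReal.coe_ne_top _))).comp
      (continuous_const.prodMk (continuous_coe_real_ereal.comp hf)).continuousAt

noncomputable def infAddDiv (g : ℝ → EReal) (ε : ℝ) : EReal :=
  ⨅ t ∈ Ioi (0 : ℝ), g t + ((ε / t : ℝ) : EReal)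

section infAddDiv

variable (g : ℝ → EReal)

theorem infAddDiv_le {t : ℝ} (ht : 0 < t) (ε : ℝ) :
    infAddDiv g ε ≤ g t + ((ε / t : ℝ) : EReal) :=
  iInf₂_le t ht

theorem infAddDiv_monotone : Monotone (infAddDiv g) := fun _ _ hε =>
  iInf₂_mono fun _ ht => by gcongr; exact le_of_lt ht

theorem upperSemicontinuous_infAddDiv : UpperSemicontinuous (infAddDiv g) :=
  upperSemicontinuous_iInf fun t => upperSemicontinuous_iInf fun _ =>
    (EReal.continuous_const_add_coe (g t) (continuous_id.div_const t)).upperSemicontinuous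

variable {g}

/-- Below `τ` the terms of the infimum are controlled directly; from `τ` on, lowering `ε` to `ε'`
lowers each term by at most `(ε - ε') / τ`. -/
theorem le_infAddDiv_of_le_shift {τ ε ε' : ℝ} {r : EReal} (hτ : 0 < τ) (hε : ε' ≤ ε)
    (hsmall : ∀ t ∈ Ioo 0 τ, r ≤ g t + ((ε' / t : ℝ) : EReal))
    (hlarge : r ≤ infAddDiv g ε + (((ε' - ε) / τ : ℝ) : EReal)) :
    r ≤ infAddDiv g ε' := by
  refine le_iInf₂ fun t (ht : 0 < t) => ?_
  rcases lt_or_ge t τ with htτ | hτt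
  · exact hsmall t ⟨ht, htτ⟩
  have hdiv : (ε' - ε) / τ ≤ (ε' - ε) / t := by
    rw [← neg_sub ε ε', neg_div, neg_div, neg_le_neg_iff]
    exact div_le_div_of_nonneg_left (by linarith) hτ hτt
  calc r ≤ infAddDiv g ε + (((ε' - ε) / τ : ℝ) : EReal) := hlarge
    _ ≤ g t + ((ε / t : ℝ) : EReal) + (((ε' - ε) / t : ℝ) : EReal) :=
      add_le_add (infAddDiv_le g ht ε) (EReal.coe_le_coe_iff.2 hdiv)
    _ = g t + ((ε' / t : ℝ) : EReal) := by
      rw [add_assoc, ← EReal.coe_add]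
      congr 2
      ring

theorem lowerSemicontinuousAt_infAddDiv
    (hg : ∀ δ > 0, ∀ᶠ t in 𝓝[>] 0, ((-δ / t : ℝ) : EReal) ≤ g t) {ε₀ : ℝ} (hε₀ : 0 < ε₀) :
    LowerSemicontinuousAt (infAddDiv g) ε₀ := by
  intro y hy
  obtain ⟨r, hyr, hr⟩ := EReal.exists_between_coe_real hy
  have hrt : ∀ᶠ t in 𝓝 (0 : ℝ), r * t < ε₀ / 4 :=
    (continuous_const.mul continuous_id).continuousAt.eventually_lt continuous_const.continuousAt
      (by simpa using hε₀)
  obtain ⟨τ, hτ, hτsmall⟩ := (nhdsGT_basis (0 : ℝ)).mem_iff.1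
    ((hg (ε₀ / 4) (by positivity)).and (nhdsWithin_le_nhds hrt))
  have hshift : ∀ᶠ ε in 𝓝 ε₀, (r : EReal) < infAddDiv g ε₀ + (((ε - ε₀) / τ : ℝ) : EReal) :=
    continuousAt_const.eventually_lt
      (EReal.continuous_const_add_coe _ ((continuous_sub_right ε₀).div_const τ)).continuousAt
      (by simpa using hr)
  filter_upwards [hshift, lt_mem_nhds (half_lt_self hε₀)] with ε hshiftε hε
  rcases le_total ε₀ ε with hε₀ε | hεε₀
  · exact hy.trans_le (infAddDiv_monotone g hε₀ε)
  refine hyr.trans_le (le_infAddDiv_of_le_shift hτ hεε₀ (fun t ht => ?_) hshiftε.le)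
  obtain ⟨hgt, hrtlt⟩ := hτsmall ht
  have hreal : r ≤ -(ε₀ / 4) / t + ε / t := by
    rw [← add_div, le_div_iff₀ ht.1]
    linarith
  calc (r : EReal) ≤ ((-(ε₀ / 4) / t + ε / t : ℝ) : EReal) := EReal.coe_le_coe_iff.2 hreal
    _ ≤ g t + ((ε / t : ℝ) : EReal) := by rw [EReal.coe_add]; gcongr

end infAddDiv

section diffQuotient

variable {X : Type*} [NormedAddCommGroup X] [NormedSpace ℝ X]

noncomputable def diffQuotient (Φ : X → EReal) (x v : X) (c t : ℝ) : EReal :=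
  ((t⁻¹ : ℝ) : EReal) * Φ (x + t • v) + ((-c / t : ℝ) : EReal)

theorem dirDeriv_eq_infAddDiv (Φ : X → EReal) (x v : X) (c : ℝ) :
    dirDeriv Φ x v c = infAddDiv (diffQuotient Φ x v c) := by
  ext ε
  refine iInf_congr fun t => iInf_congr fun _ => ?_
  rw [diffQuotient, add_assoc, ← EReal.coe_add]
  congr 2
  ring

theorem eventually_neg_div_le_diffQuotient {Φ : X → EReal} {x : X} {c : ℝ}
    (hΦ : LowerSemicontinuousAt Φ x) (hx : Φ x = c) (v : X) {δ : ℝ} (hδ : 0 < δ) :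
    ∀ᶠ t in 𝓝[>] 0, ((-δ / t : ℝ) : EReal) ≤ diffQuotient Φ x v c t := by
  have hray : Tendsto (fun t : ℝ => x + t • v) (𝓝 0) (𝓝 x) :=
    (continuous_const.add (continuous_id.smul continuous_const)).tendsto' 0 x (by simp)
  have hbelow : ((c - δ : ℝ) : EReal) < Φ x := by
    rw [hx, EReal.coe_lt_coe_iff]
    linarith
  have hnear : ∀ᶠ t in 𝓝 (0 : ℝ), ((c - δ : ℝ) : EReal) < Φ (x + t • v) :=
    hray.eventually (hΦ _ hbelow)
  filter_upwards [nhdsWithin_le_nhds hnear, self_mem_nhdsWithin] with t hΦt (ht : 0 < t)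
  calc ((-δ / t : ℝ) : EReal)
        = ((t⁻¹ : ℝ) : EReal) * ((c - δ : ℝ) : EReal) + ((-c / t : ℝ) : EReal) := by
        rw [← EReal.coe_mul, ← EReal.coe_add]
        congr 1
        ring
    _ ≤ diffQuotient Φ x v c t := by
      unfold diffQuotient
      gcongr

end diffQuotient

theorem stmt0_general {X : Type*} [NormedAddCommGroup X] [NormedSpace ℝ X]
    (Φ : X → EReal)
    (hlsc : LowerSemicontinuous Φ)
    (x v : X) (c : ℝ) (hx : Φ x = (c : EReal)) :
    (∀ ε₀ ε₁ : ℝ, 0 ≤ ε₀ → ε₀ ≤ ε₁ → dirDeriv Φ x v c ε₀ ≤ dirDeriv Φ x v c ε₁) ∧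
    (∀ ε₀ : ℝ, 0 ≤ ε₀ →
      ContinuousWithinAt (fun ε : ℝ => dirDeriv Φ x v c ε) (Set.Ici ε₀) ε₀) ∧
    (∀ ε₀ : ℝ, 0 < ε₀ → dirDeriv Φ x v c ε₀ ≠ ⊤ → dirDeriv Φ x v c ε₀ ≠ ⊥ →
      ContinuousAt (fun ε : ℝ => dirDeriv Φ x v c ε) ε₀) := by
  simp only [dirDeriv_eq_infAddDiv]
  have hmono := infAddDiv_monotone (diffQuotient Φ x v c)
  have husc := upperSemicontinuous_infAddDiv (diffQuotient Φ x v c)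
  refine ⟨fun _ _ _ h => hmono h,
    fun ε₀ _ => hmono.continuousWithinAt_Ici_of_upperSemicontinuousAt (husc ε₀),
    fun ε₀ hε₀ _ _ => continuousAt_iff_lower_upperSemicontinuousAt.2 ⟨?_, husc ε₀⟩⟩
  exact lowerSemicontinuousAt_infAddDiv
    (fun _ hδ => eventually_neg_div_le_diffQuotient (hlsc x) hx v hδ) hε₀

theorem stmt0 {X : Type*} [NormedAddCommGroup X] [NormedSpace ℝ X] [CompleteSpace X]
    (Φ : X → EReal)
    (hproper : ∃ z, Φ z ≠ ⊤) (hbot : ∀ z, Φ z ≠ ⊥)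
    (hconv : ∀ x y : X, ∀ t : ℝ, 0 ≤ t → t ≤ 1 →
      Φ (t • x + (1 - t) • y) ≤ ((t : ℝ) : EReal) * Φ x + (((1 - t : ℝ)) : EReal) * Φ y)
    (hlsc : LowerSemicontinuous Φ)
    (x v : X) (c : ℝ) (hx : Φ x = (c : EReal)) :
    (∀ ε₀ ε₁ : ℝ, 0 ≤ ε₀ → ε₀ ≤ ε₁ → dirDeriv Φ x v c ε₀ ≤ dirDeriv Φ x v c ε₁) ∧
    (∀ ε₀ : ℝ, 0 ≤ ε₀ →
      ContinuousWithinAt (fun ε : ℝ => dirDeriv Φ x v c ε) (Set.Ici ε₀) ε₀) ∧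
    (∀ ε₀ : ℝ, 0 < ε₀ → dirDeriv Φ x v c ε₀ ≠ ⊤ → dirDeriv Φ x v c ε₀ ≠ ⊥ →
      ContinuousAt (fun ε : ℝ => dirDeriv Φ x v c ε) ε₀) :=
  stmt0_general Φ hlsc x v c hx
end

section
/- Let X be a real Banach space with dual X*, and Φ : X → ℝ ∪ {+∞} proper, lsc, convex. For ε ≥ 0 and x ∈ dom Φ, the ε-subdifferential is ∂_ε Φ(x) := {x* ∈ X* : ⟨x*, u − x⟩ ≤ Φ(u) − Φ(x) + ε for all u ∈ X}. Then for every ε > 0 and v ∈ X, Φ'_ε(x; v) = sup { ⟨x*, v⟩ : x* ∈ ∂_ε Φ(x) }, where Φ'_ε(x; v) := inf_{t>0}(Φ(x+tv) − Φ(x) + ε)/t. -/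
open Set Topology Filter

/-- The ε-subdifferential of `Φ` at `x`:
`{x* : ⟨x*, u − x⟩ ≤ Φ(u) − Φ(x) + ε for all u}`, in the additive form
`Φ(x) + ⟨x*, u − x⟩ ≤ Φ(u) + ε`. -/
def SubdiffAt {X : Type*} [NormedAddCommGroup X] [NormedSpace ℝ X]
    (Φ : X → EReal) (x : X) (ε : ℝ) : Set (X →L[ℝ] ℝ) :=
  {p | ∀ u : X, Φ x + ((p (u - x) : ℝ) : EReal) ≤ Φ u + ((ε : ℝ) : EReal)}


/-!
Fix `r < r' < Φ'_ε(x; v)` and `T = ε / (r' - r)`. The segment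
`{(x + t • v, Φ x - ε + t * r') : 0 ≤ t ≤ T}` is compact, convex and, by the definition of
`Φ'_ε`, disjoint from the closed convex epigraph of `Φ`. Hahn–Banach separates them by a hyperplane
that cannot be vertical, since `(x, Φ x - ε)` lies directly below `(x, Φ x)`. So it is the graph of
an affine map `Φ x - ε + ℓ (· - x)` below `Φ`, whence `ℓ ∈ ∂_ε Φ(x)`; comparing it with `Φ x` at the
far end `x + T • v` of the segment gives `r' - ℓ v < ε / T`, i.e. `r < ℓ v`. The reverse
inequality `ℓ v ≤ Φ'_ε(x; v)` for `ℓ ∈ ∂_ε Φ(x)` is immediate from the definitions.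
-/

section Separation

variable {E : Type*} [TopologicalSpace E] [AddCommGroup E] [IsTopologicalAddGroup E]
  [Module ℝ E] [ContinuousSMul ℝ E] [LocallyConvexSpace ℝ E]

theorem exists_strongDual_sub_lt_sub_of_disjoint {S C : Set (E × ℝ)} (hSconv : Convex ℝ S)
    (hScomp : IsCompact S) (hCconv : Convex ℝ C) (hCclosed : IsClosed C) (hSC : Disjoint S C)
    {x : E} {a b : ℝ} (ha : (x, a) ∈ S) (hb : (x, b) ∈ C) (hab : a < b) :
    ∃ ℓ : StrongDual ℝ E, ∀ p ∈ S, ∀ q ∈ C, p.2 - ℓ p.1 < q.2 - ℓ q.1 := by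
  obtain ⟨f, u, w, hfS, huw, hfC⟩ :=
    geometric_hahn_banach_compact_closed hSconv hScomp hCconv hCclosed hSC
  have hf_lt : ∀ p ∈ S, ∀ q ∈ C, f p < f q := fun p hp q hq =>
    (hfS p hp).trans (huw.trans (hfC q hq))
  set β := f (0, 1)
  have hβ : 0 < β := by
    have hdiff : f (x, b) - f (x, a) = (b - a) * β := by
      rw [← map_sub, Prod.mk_sub_mk, sub_self, ← smul_eq_mul, ← map_smul, Prod.smul_mk,
        smul_zero, smul_eq_mul, mul_one]
    exact (mul_pos_iff_of_pos_left (sub_pos.2 hab)).1 (hdiff ▸ sub_pos.2 (hf_lt _ ha _ hb))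
  set ℓ : StrongDual ℝ E := -β⁻¹ • f.comp (ContinuousLinearMap.inl ℝ E ℝ)
  have hf : ∀ p : E × ℝ, f p = β * (p.2 - ℓ p.1) := fun p => by
    conv_lhs => rw [show p = (p.1, 0) + p.2 • ((0 : E), (1 : ℝ)) by ext <;> simp]
    simp only [map_add, map_smul, smul_eq_mul, ℓ, smul_apply, ContinuousLinearMap.comp_apply,
      ContinuousLinearMap.inl_apply]
    field_simp
    ring
  exact ⟨ℓ, fun p hp q hq => lt_of_mul_lt_mul_left (hf p ▸ hf q ▸ hf_lt p hp q hq) hβ.le⟩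

end Separation

def realEpigraph {X : Type*} (Φ : X → EReal) : Set (X × ℝ) := {p | Φ p.1 ≤ p.2}

theorem LowerSemicontinuous.isClosed_realEpigraph {X : Type*} [TopologicalSpace X]
    {Φ : X → EReal} (hΦ : LowerSemicontinuous Φ) : IsClosed (realEpigraph Φ) :=
  hΦ.isClosed_epigraph.preimage (continuous_id.prodMap continuous_coe_real_ereal)

theorem convex_realEpigraph {X : Type*} [AddCommGroup X] [Module ℝ X] {Φ : X → EReal}
    (hconv : ∀ x y : X, ∀ t : ℝ, 0 ≤ t → t ≤ 1 →
      Φ (t • x + (1 - t) • y) ≤ ((t : ℝ) : EReal) * Φ x + (((1 - t : ℝ)) : EReal) * Φ y) :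
    Convex ℝ (realEpigraph Φ) := by
  rintro ⟨u₁, α₁⟩ h₁ ⟨u₂, α₂⟩ h₂ a b ha hb hab
  obtain rfl : b = 1 - a := by linarith
  calc Φ (a • u₁ + (1 - a) • u₂) ≤ (a : EReal) * Φ u₁ + ((1 - a : ℝ) : EReal) * Φ u₂ :=
        hconv u₁ u₂ a ha (by linarith)
    _ ≤ (a : EReal) * α₁ + ((1 - a : ℝ) : EReal) * α₂ :=
        add_le_add (mul_le_mul_of_nonneg_left h₁ (by exact_mod_cast ha))
          (mul_le_mul_of_nonneg_left h₂ (by exact_mod_cast hb))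
    _ = ((a • (u₁, α₁) + (1 - a) • (u₂, α₂)).2 : ℝ) := by simp

section DirDeriv

variable {X : Type*} [NormedAddCommGroup X] [NormedSpace ℝ X] {Φ : X → EReal} {x : X} {c ε : ℝ}

theorem coe_apply_le_dirDeriv (hx : Φ x = c) {p : StrongDual ℝ X} (hp : p ∈ SubdiffAt Φ x ε)
    (v : X) : (p v : EReal) ≤ dirDeriv Φ x v c ε := by
  refine le_iInf₂ fun t (ht : 0 < t) => ?_
  have hpt := hp (x + t • v)
  rw [hx, add_sub_cancel_left, map_smul, smul_eq_mul, ← EReal.coe_add] at hpt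
  generalize Φ (x + t • v) = y at hpt ⊢
  induction y using EReal.rec with
  | bot => simp only [EReal.bot_add, le_bot_iff, EReal.coe_ne_bot] at hpt
  | top => simp [EReal.coe_mul_top_of_pos (inv_pos.2 ht)]
  | coe A =>
    have hle : c + t * p v ≤ A + ε := by exact_mod_cast hpt
    rw [← EReal.coe_mul, ← EReal.coe_add, EReal.coe_le_coe_iff, inv_mul_eq_div, ← add_div,
      le_div_iff₀ ht]
    linarith

theorem coe_lt_apply_of_lt_dirDeriv (hx : Φ x = c) (hε : 0 < ε) {v : X} {r : ℝ}
    (hr : (r : EReal) < dirDeriv Φ x v c ε) {t : ℝ} (ht : 0 ≤ t) :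
    ((c - ε + t * r : ℝ) : EReal) < Φ (x + t • v) := by
  rcases ht.eq_or_lt with rfl | ht
  · rw [zero_smul, add_zero, hx, EReal.coe_lt_coe_iff]
    linarith
  have hrt : (r : EReal) < (t⁻¹ : ℝ) * Φ (x + t • v) + ((ε - c) / t : ℝ) :=
    hr.trans_le (iInf₂_le t ht)
  generalize Φ (x + t • v) = y at hrt ⊢
  induction y using EReal.rec with
  | bot => simp [EReal.coe_mul_bot_of_pos (inv_pos.2 ht)] at hrt
  | top => exact EReal.coe_lt_top _
  | coe A =>
    rw [← EReal.coe_mul, ← EReal.coe_add, EReal.coe_lt_coe_iff, inv_mul_eq_div, ← add_div,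
      lt_div_iff₀ ht] at hrt
    rw [EReal.coe_lt_coe_iff]
    linarith

theorem mem_subdiffAt_of_forall_realEpigraph (hx : Φ x = c) {p : StrongDual ℝ X}
    (hp : ∀ q ∈ realEpigraph Φ, c - ε + p (q.1 - x) ≤ q.2) : p ∈ SubdiffAt Φ x ε := by
  intro u
  have hle : ((c - ε + p (u - x) : ℝ) : EReal) ≤ Φ u :=
    EReal.le_of_forall_lt_iff_le.1 fun α hα => EReal.coe_le_coe_iff.2 (hp (u, α) hα.le)
  calc Φ x + (p (u - x) : EReal) = ((c - ε + p (u - x) : ℝ) : EReal) + ε := by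
        rw [hx]; norm_cast; ring
    _ ≤ Φ u + ε := by gcongr

theorem exists_mem_subdiffAt_lt_apply
    (hconv : ∀ x y : X, ∀ t : ℝ, 0 ≤ t → t ≤ 1 →
      Φ (t • x + (1 - t) • y) ≤ ((t : ℝ) : EReal) * Φ x + (((1 - t : ℝ)) : EReal) * Φ y)
    (hlsc : LowerSemicontinuous Φ) (hx : Φ x = c) (hε : 0 < ε) {v : X} {r : ℝ}
    (hr : (r : EReal) < dirDeriv Φ x v c ε) :
    ∃ p ∈ SubdiffAt Φ x ε, r < p v := by
  obtain ⟨r', hrr', hr'⟩ := EReal.exists_between_coe_real hr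
  have hrr' : r < r' := EReal.coe_lt_coe_iff.1 hrr'
  set T := ε / (r' - r)
  have hT : 0 < T := div_pos hε (sub_pos.2 hrr')
  set S := segment ℝ (x, c - ε) (x + T • v, c - ε + T * r') with hSdef
  have hS : S ⊆ (fun t : ℝ => (x + t • v, c - ε + t * r')) '' Icc 0 T := by
    rw [hSdef, segment_eq_image']
    rintro _ ⟨θ, hθ, rfl⟩
    refine ⟨θ * T, ⟨by nlinarith [hθ.1], by nlinarith [hθ.2]⟩, ?_⟩
    ext <;> simp [mul_smul]; ring
  have hdisj : Disjoint S (realEpigraph Φ) := by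
    refine Set.disjoint_left.2 fun q hqS hqE => ?_
    obtain ⟨t, ht, rfl⟩ := hS hqS
    exact (coe_lt_apply_of_lt_dirDeriv hx hε hr' ht.1).not_ge hqE
  have hScomp : IsCompact S := by
    rw [hSdef, segment_eq_image_lineMap]
    exact isCompact_Icc.image AffineMap.lineMap_continuous
  obtain ⟨p, hp⟩ := exists_strongDual_sub_lt_sub_of_disjoint (convex_segment _ _) hScomp
    (convex_realEpigraph hconv) hlsc.isClosed_realEpigraph hdisj (left_mem_segment ℝ _ _)
    (show (x, c) ∈ realEpigraph Φ from hx.le) (sub_lt_self c hε)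
  refine ⟨p, mem_subdiffAt_of_forall_realEpigraph hx fun q hq => ?_, ?_⟩
  · have hleft := hp _ (left_mem_segment ℝ _ _) q hq
    dsimp only at hleft
    rw [map_sub]
    linarith
  · have hright := hp _ (right_mem_segment ℝ _ _) (x, c) hx.le
    dsimp only at hright
    rw [map_add, map_smul, smul_eq_mul] at hright
    have hTε : T * (r' - r) = ε := div_mul_cancel₀ ε (sub_pos.2 hrr').ne'
    nlinarith

end DirDeriv

theorem stmt1_general {X : Type*} [NormedAddCommGroup X] [NormedSpace ℝ X]
    (Φ : X → EReal)
    (hconv : ∀ x y : X, ∀ t : ℝ, 0 ≤ t → t ≤ 1 →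
      Φ (t • x + (1 - t) • y) ≤ ((t : ℝ) : EReal) * Φ x + (((1 - t : ℝ)) : EReal) * Φ y)
    (hlsc : LowerSemicontinuous Φ)
    (x v : X) (c : ℝ) (hx : Φ x = (c : EReal))
    (ε : ℝ) (hε : 0 < ε) :
    dirDeriv Φ x v c ε = ⨆ p ∈ SubdiffAt Φ x ε, ((p v : ℝ) : EReal) := by
  refine le_antisymm (le_of_forall_lt_imp_le_of_dense fun a ha => ?_)
    (iSup₂_le fun p hp => coe_apply_le_dirDeriv hx hp v)
  obtain ⟨r, har, hr⟩ := EReal.exists_between_coe_real ha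
  obtain ⟨p, hp, hrp⟩ := exists_mem_subdiffAt_lt_apply hconv hlsc hx hε hr
  calc a ≤ r := har.le
    _ ≤ p v := EReal.coe_le_coe_iff.2 hrp.le
    _ ≤ ⨆ p ∈ SubdiffAt Φ x ε, ((p v : ℝ) : EReal) := le_biSup (fun p => (p v : EReal)) hp

theorem stmt1 {X : Type*} [NormedAddCommGroup X] [NormedSpace ℝ X] [CompleteSpace X]
    (Φ : X → EReal)
    (hproper : ∃ z, Φ z ≠ ⊤) (hbot : ∀ z, Φ z ≠ ⊥)
    (hconv : ∀ x y : X, ∀ t : ℝ, 0 ≤ t → t ≤ 1 →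
      Φ (t • x + (1 - t) • y) ≤ ((t : ℝ) : EReal) * Φ x + (((1 - t : ℝ)) : EReal) * Φ y)
    (hlsc : LowerSemicontinuous Φ)
    (x v : X) (c : ℝ) (hx : Φ x = (c : EReal))
    (ε : ℝ) (hε : 0 < ε) :
    dirDeriv Φ x v c ε = ⨆ p ∈ SubdiffAt Φ x ε, ((p v : ℝ) : EReal) :=
  stmt1_general Φ hconv hlsc x v c hx ε hε
end

section
/- Let X be a real Banach space, Φ : X → ℝ ∪ {+∞} proper, lsc, convex, and let x̄ ∈ dom Φ, δ ≥ 0, λ ∈ ℝ with Φ(x̄) ≤ λ < ∞. Suppose Slater's condition holds at λ: there exists x₀ with Φ(x₀) < λ. If ξ belongs to the δ-normal set N^δ_{[Φ≤λ]}(x̄) := {x* : ⟨x*, x − x̄⟩ ≤ δ for all x with Φ(x) ≤ λ}, then there exists μ ≥ 0 such that ξ ∈ ∂_{δ + μ(Φ(x̄) − λ)}(μΦ)(x̄). -/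
/-!
With `ℓ u = ξ (u - x̄) - δ`, the claim is `ℓ u ≤ μ (Φ u - λ)` for all `u`: a Lagrange multiplier
for the single constraint `Φ ≤ λ`. Convexity of `Φ` along a segment from a strictly feasible point
to an infeasible one shows that every slope `ℓ u / (Φ u - λ)` with `Φ u > λ` lies below every
slope `-ℓ w / (λ - Φ w)` with `Φ w < λ`; Slater's condition makes the latter family nonempty, and
any `μ` in between works.
-/

/-- `μΦ` with the convention `(0·Φ)(x) = 0` on `dom Φ` and `+∞` outside. -/
noncomputable def smulPhi {X : Type*} (μ : ℝ) (Φ : X → EReal) : X → EReal :=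
  fun x => if Φ x = ⊤ then ⊤ else ((μ : ℝ) : EReal) * Φ x

theorem smulPhi_of_eq_coe {X : Type*} {Φ : X → EReal} {x : X} {a : ℝ} (μ : ℝ)
    (h : Φ x = a) : smulPhi μ Φ x = ((μ * a : ℝ) : EReal) := by
  simp [smulPhi, h, EReal.coe_mul]

theorem smulPhi_of_eq_top {X : Type*} {Φ : X → EReal} {x : X} (μ : ℝ) (h : Φ x = ⊤) :
    smulPhi μ Φ x = ⊤ := by
  simp [smulPhi, h]

section LagrangeMultiplier

variable {X : Type*} [AddCommGroup X] [Module ℝ X]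

/-- Evaluating `ℓ` at the point of the segment `[w, u]` where the convex function `Φ` reaches
the level `lam` (`t = (lam - a) / (b - a)`). -/
theorem mul_add_mul_nonpos_of_convex (Φ : X → EReal)
    (hconv : ∀ x y : X, ∀ t : ℝ, 0 ≤ t → t ≤ 1 →
      Φ (t • x + (1 - t) • y) ≤ ((t : ℝ) : EReal) * Φ x + (((1 - t : ℝ)) : EReal) * Φ y)
    (ℓ : X →ᵃ[ℝ] ℝ) {lam : ℝ} (hℓ : ∀ u, Φ u ≤ (lam : EReal) → ℓ u ≤ 0)
    {w u : X} {a b : ℝ} (hw : Φ w = a) (ha : a < lam) (hu : Φ u = b) (hb : lam < b) :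
    (lam - a) * ℓ u + (b - lam) * ℓ w ≤ 0 := by
  have hba : 0 < b - a := by linarith
  set t := (lam - a) / (b - a)
  have ht : t * (b - a) = lam - a := div_mul_cancel₀ _ hba.ne'
  have ht0 : 0 ≤ t := div_nonneg (by linarith) hba.le
  have ht1 : t ≤ 1 := (div_le_one hba).2 (by linarith)
  have hlevel : Φ (t • u + (1 - t) • w) ≤ (lam : EReal) := by
    have h := hconv u w t ht0 ht1
    rwa [hu, hw, ← EReal.coe_mul, ← EReal.coe_mul, ← EReal.coe_add,
      show t * b + (1 - t) * a = lam by linear_combination ht] at h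
  have hcombo : ℓ (t • u + (1 - t) • w) = t * ℓ u + (1 - t) * ℓ w :=
    Convex.combo_affine_apply (add_sub_cancel t 1)
  have h := hℓ _ hlevel
  rw [hcombo] at h
  calc (lam - a) * ℓ u + (b - lam) * ℓ w = (t * ℓ u + (1 - t) * ℓ w) * (b - a) := by
        linear_combination (-(ℓ u) + ℓ w) * ht
    _ ≤ 0 := mul_nonpos_of_nonpos_of_nonneg h hba.le

theorem exists_lagrange_multiplier (Φ : X → EReal) (hbot : ∀ z, Φ z ≠ ⊥)
    (hconv : ∀ x y : X, ∀ t : ℝ, 0 ≤ t → t ≤ 1 →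
      Φ (t • x + (1 - t) • y) ≤ ((t : ℝ) : EReal) * Φ x + (((1 - t : ℝ)) : EReal) * Φ y)
    (ℓ : X →ᵃ[ℝ] ℝ) (lam : ℝ) (hℓ : ∀ u, Φ u ≤ (lam : EReal) → ℓ u ≤ 0)
    (slater : ∃ x₀ : X, Φ x₀ < (lam : EReal)) :
    ∃ μ : ℝ, 0 ≤ μ ∧ ∀ (u : X) (b : ℝ), Φ u = b → ℓ u ≤ μ * (b - lam) := by
  set S : Set ℝ := {m | ∃ (w : X) (a : ℝ), Φ w = a ∧ a < lam ∧ m = -ℓ w / (lam - a)}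
  have hSne : S.Nonempty := by
    obtain ⟨x₀, hx₀⟩ := slater
    lift Φ x₀ to ℝ using ⟨hx₀.ne_top, hbot x₀⟩ with a₀ ha₀
    exact ⟨_, x₀, a₀, ha₀.symm, EReal.coe_lt_coe_iff.1 hx₀, rfl⟩
  have hS0 : ∀ m ∈ S, 0 ≤ m := by
    rintro m ⟨w, a, hw, ha, rfl⟩
    have := hℓ w (hw ▸ EReal.coe_le_coe_iff.2 ha.le)
    exact div_nonneg (by linarith) (by linarith)
  refine ⟨sInf S, le_csInf hSne hS0, fun u b hu => ?_⟩
  rcases lt_trichotomy b lam with hb | rfl | hb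
  · have hle : sInf S ≤ -ℓ u / (lam - b) := csInf_le ⟨0, hS0⟩ ⟨u, b, hu, hb, rfl⟩
    rw [le_div_iff₀ (by linarith)] at hle
    linarith
  · simpa using hℓ u hu.le
  · have hle : ℓ u / (b - lam) ≤ sInf S := by
      refine le_csInf hSne ?_
      rintro m ⟨w, a, hw, ha, rfl⟩
      rw [div_le_div_iff₀ (by linarith) (by linarith)]
      linarith [mul_add_mul_nonpos_of_convex Φ hconv ℓ hℓ hw ha hu hb]
    rw [div_le_iff₀ (by linarith)] at hle
    linarith

end LagrangeMultiplier

theorem stmt2_general {X : Type*} [NormedAddCommGroup X] [NormedSpace ℝ X]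
    (Φ : X → EReal)
    (hbot : ∀ z, Φ z ≠ ⊥)
    (hconv : ∀ x y : X, ∀ t : ℝ, 0 ≤ t → t ≤ 1 →
      Φ (t • x + (1 - t) • y) ≤ ((t : ℝ) : EReal) * Φ x + (((1 - t : ℝ)) : EReal) * Φ y)
    (xb : X) (c : ℝ) (hc : Φ xb = (c : EReal))
    (lam δ : ℝ)
    (slater : ∃ x₀ : X, Φ x₀ < ((lam : ℝ) : EReal))
    (ξ : X →L[ℝ] ℝ)
    (hξ : ∀ u : X, Φ u ≤ ((lam : ℝ) : EReal) → ξ (u - xb) ≤ δ) :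
    ∃ μ : ℝ, 0 ≤ μ ∧ ∀ u : X,
      smulPhi μ Φ xb + ((ξ (u - xb) : ℝ) : EReal) ≤
        smulPhi μ Φ u + (((δ + μ * (c - lam) : ℝ)) : EReal) := by
  let ℓ : X →ᵃ[ℝ] ℝ := (ξ : X →ₗ[ℝ] ℝ).toAffineMap - AffineMap.const ℝ X (ξ xb + δ)
  have hℓ : ∀ u, ℓ u = ξ (u - xb) - δ := fun u => by
    simp only [ℓ, AffineMap.coe_sub, LinearMap.coe_toAffineMap, ContinuousLinearMap.coe_coe,
      AffineMap.coe_const, Pi.sub_apply, Function.const_apply, map_sub]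
    ring
  obtain ⟨μ, hμ, hmult⟩ := exists_lagrange_multiplier Φ hbot hconv ℓ lam
    (fun u hu => by linarith [hℓ u, hξ u hu]) slater
  refine ⟨μ, hμ, fun u => ?_⟩
  rw [smulPhi_of_eq_coe μ hc, ← EReal.coe_add]
  by_cases huT : Φ u = ⊤
  · rw [smulPhi_of_eq_top μ huT, EReal.top_add_of_ne_bot (EReal.coe_ne_bot _)]
    exact le_top
  · lift Φ u to ℝ using ⟨huT, hbot u⟩ with b hb
    rw [smulPhi_of_eq_coe μ hb.symm, ← EReal.coe_add, EReal.coe_le_coe_iff]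
    linarith [hmult u b hb.symm, hℓ u]

theorem stmt2 {X : Type*} [NormedAddCommGroup X] [NormedSpace ℝ X] [CompleteSpace X]
    (Φ : X → EReal)
    (hproper : ∃ z, Φ z ≠ ⊤) (hbot : ∀ z, Φ z ≠ ⊥)
    (hconv : ∀ x y : X, ∀ t : ℝ, 0 ≤ t → t ≤ 1 →
      Φ (t • x + (1 - t) • y) ≤ ((t : ℝ) : EReal) * Φ x + (((1 - t : ℝ)) : EReal) * Φ y)
    (hlsc : LowerSemicontinuous Φ)
    (xb : X) (c : ℝ) (hc : Φ xb = (c : EReal))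
    (lam δ : ℝ) (hδ : 0 ≤ δ) (hclam : c ≤ lam)
    (slater : ∃ x₀ : X, Φ x₀ < ((lam : ℝ) : EReal))
    (ξ : X →L[ℝ] ℝ)
    (hξ : ∀ u : X, Φ u ≤ ((lam : ℝ) : EReal) → ξ (u - xb) ≤ δ) :
    ∃ μ : ℝ, 0 ≤ μ ∧ ∀ u : X,
      smulPhi μ Φ xb + ((ξ (u - xb) : ℝ) : EReal) ≤
        smulPhi μ Φ u + (((δ + μ * (c - lam) : ℝ)) : EReal) :=
  stmt2_general Φ hbot hconv xb c hc lam δ slater ξ hξ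
end

section
/- Let X be a real Banach space, Φ₁, …, Φ_n : X → ℝ ∪ {+∞} proper, lsc, convex, and Φ := max{Φ₁, …, Φ_n}. Then for every x ∈ X with Φ(x) finite, every ε ≥ 0, and every choice of weights λ₁, …, λ_n > 0 with Σλ_i = 1 and every η ∈ [0, ε] satisfying Σλ_i Φ_i(x) ≥ Φ(x) + η − ε, one has ∂_η(Σ_i λ_i Φ_i)(x) ⊆ ∂_ε Φ(x). -/
open Set Topology Filter

private lemma ereal_coe_sum {α : Type*} (s : Finset α) (f : α → ℝ) :
    ((∑ i ∈ s, f i : ℝ) : EReal) = ∑ i ∈ s, ((f i : ℝ) : EReal) :=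
  map_sum (⟨⟨Real.toEReal, EReal.coe_zero⟩, fun _ _ => EReal.coe_add _ _⟩ : ℝ →+ EReal) f s

theorem stmt3 {X : Type*} [NormedAddCommGroup X] [NormedSpace ℝ X] [CompleteSpace X]
    (n : ℕ) (Φ : Fin n → X → EReal)
    (hproper : ∀ i, ∃ z, Φ i z ≠ ⊤) (hbot : ∀ i z, Φ i z ≠ ⊥)
    (hconv : ∀ i, ∀ x y : X, ∀ t : ℝ, 0 ≤ t → t ≤ 1 →
      Φ i (t • x + (1 - t) • y) ≤ ((t : ℝ) : EReal) * Φ i x + (((1 - t : ℝ)) : EReal) * Φ i y)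
    (hlsc : ∀ i, LowerSemicontinuous (Φ i))
    (x : X) (c : ℝ) (hx : (⨆ i, Φ i x) = (c : EReal))
    (ε η : ℝ) (hε : 0 ≤ ε) (hη : 0 ≤ η) (hηε : η ≤ ε)
    (lam : Fin n → ℝ) (hlam : ∀ i, 0 < lam i) (hsum : ∑ i, lam i = 1)
    (hineq : (((c + η - ε : ℝ)) : EReal) ≤ ∑ i, ((lam i : ℝ) : EReal) * Φ i x)
    (p : X →L[ℝ] ℝ)
    (hp : ∀ u : X, (∑ i, ((lam i : ℝ) : EReal) * Φ i x) + ((p (u - x) : ℝ) : EReal) ≤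
      (∑ i, ((lam i : ℝ) : EReal) * Φ i u) + ((η : ℝ) : EReal)) :
    ∀ u : X, ((c : ℝ) : EReal) + ((p (u - x) : ℝ) : EReal) ≤ (⨆ i, Φ i u) + ((ε : ℝ) : EReal) := by
  intro u
  -- n > 0
  rcases Nat.eq_zero_or_pos n with hn | hn
  · subst hn
    simp at hx
  haveI : Nonempty (Fin n) := ⟨⟨0, hn⟩⟩
  -- Φ i x are real
  have hΦx : ∀ i, ∃ r : ℝ, Φ i x = (r : EReal) := by
    intro i
    have h1 : Φ i x ≤ (c : EReal) := hx ▸ le_iSup (fun i => Φ i x) i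
    lift Φ i x to ℝ using ⟨ne_top_of_le_ne_top (EReal.coe_ne_top c) h1, hbot i x⟩ with r
    exact ⟨r, rfl⟩
  choose a ha using hΦx
  -- case on sup Φ i u
  rcases eq_top_or_lt_top (⨆ i, Φ i u) with htop | htop
  · rw [htop]
    simp
  have hbotu : (⊥ : EReal) < ⨆ i, Φ i u := by
    refine lt_of_lt_of_le ?_ (le_iSup (fun i => Φ i u) (Classical.arbitrary _))
    exact Ne.bot_lt (hbot _ u)
  lift (⨆ i, Φ i u) to ℝ using ⟨htop.ne, hbotu.ne'⟩ with M hM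
  have hΦu : ∀ i, ∃ r : ℝ, Φ i u = (r : EReal) ∧ r ≤ M := by
    intro i
    have h1 : Φ i u ≤ (M : EReal) := hM ▸ le_iSup (fun i => Φ i u) i
    lift Φ i u to ℝ using ⟨ne_top_of_le_ne_top (EReal.coe_ne_top M) h1, hbot i u⟩ with r
    exact ⟨r, rfl, by exact_mod_cast h1⟩
  choose b hb hbM using hΦu
  have hp' := hp u
  simp only [ha, hb, ← EReal.coe_mul] at hp' hineq
  rw [← ereal_coe_sum, ← ereal_coe_sum] at hp'
  rw [← ereal_coe_sum] at hineq
  rw [← EReal.coe_add, ← EReal.coe_add] at hp'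
  have hp'' : (∑ i, lam i * a i) + p (u - x) ≤ (∑ i, lam i * b i) + η := by
    exact_mod_cast hp'
  have hineq' : c + η - ε ≤ ∑ i, lam i * a i := by exact_mod_cast hineq
  have hsumb : (∑ i, lam i * b i) ≤ M := by
    calc (∑ i, lam i * b i) ≤ ∑ i, lam i * M := by
          apply Finset.sum_le_sum
          intro i _
          exact mul_le_mul_of_nonneg_left (hbM i) (hlam i).le
      _ = M := by rw [← Finset.sum_mul, hsum, one_mul]
  rw [← EReal.coe_add, ← EReal.coe_add]
  exact_mod_cast by linarith
end

section
/- Let X be a real Banach space and Φ : X → ℝ ∪ {+∞} proper, lsc, convex, and x̄ ∈ dom Φ. If μ ≥ 0, x* ∈ X*, and there exist sequences μ_n ≥ 0, ε_n ≥ 0, x_n* ∈ ∂_{ε_n}Φ(x̄) with μ_n → μ, μ_n ε_n → δ, μ_n x_n* ⇀ x* weak*, then x* ∈ ∂_δ(μΦ)(x̄). -/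
open Set Topology Filter

theorem stmt5 {X : Type*} [NormedAddCommGroup X] [NormedSpace ℝ X] [CompleteSpace X]
    (Φ : X → EReal)
    (hproper : ∃ z, Φ z ≠ ⊤) (hbot : ∀ z, Φ z ≠ ⊥)
    (hconv : ∀ x y : X, ∀ t : ℝ, 0 ≤ t → t ≤ 1 →
      Φ (t • x + (1 - t) • y) ≤ ((t : ℝ) : EReal) * Φ x + (((1 - t : ℝ)) : EReal) * Φ y)
    (hlsc : LowerSemicontinuous Φ)
    (xb : X) (c : ℝ) (hc : Φ xb = (c : EReal))
    (δ μ : ℝ) (hδ : 0 ≤ δ) (hμ : 0 ≤ μ)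
    (p : X →L[ℝ] ℝ) (μs εs : ℕ → ℝ) (ps : ℕ → X →L[ℝ] ℝ)
    (hμs : ∀ n, 0 ≤ μs n) (hεs : ∀ n, 0 ≤ εs n)
    (hsub : ∀ n, ∀ u : X,
      Φ xb + ((ps n (u - xb) : ℝ) : EReal) ≤ Φ u + ((εs n : ℝ) : EReal))
    (hμlim : Tendsto μs atTop (nhds μ))
    (hμε : Tendsto (fun n => μs n * εs n) atTop (nhds δ))
    (hweak : ∀ u : X, Tendsto (fun n => μs n * ps n u) atTop (nhds (p u))) :
    ∀ u : X, smulPhi μ Φ xb + ((p (u - xb) : ℝ) : EReal) ≤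
      smulPhi μ Φ u + ((δ : ℝ) : EReal) := by
  intro u
  have hxb : smulPhi μ Φ xb = ((μ * c : ℝ) : EReal) := by
    simp only [smulPhi, hc]
    rw [if_neg (by simp)]
    exact (EReal.coe_mul μ c).symm
  by_cases hu : Φ u = ⊤
  · have : smulPhi μ Φ u = ⊤ := by simp [smulPhi, hu]
    rw [this]
    simp [EReal.top_add_of_ne_bot]
  · -- Φ u is a real number d
    obtain ⟨d, hd⟩ : ∃ d : ℝ, Φ u = (d : EReal) := by
      lift Φ u to ℝ using ⟨hu, hbot u⟩ with d hd
      exact ⟨d, rfl⟩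
    have hsu : smulPhi μ Φ u = ((μ * d : ℝ) : EReal) := by
      simp only [smulPhi, hd]
      rw [if_neg (by simp)]
      exact (EReal.coe_mul μ d).symm
    -- real inequality for each n
    have hreal : ∀ n, c + ps n (u - xb) ≤ d + εs n := by
      intro n
      have := hsub n u
      rw [hc, hd] at this
      exact_mod_cast this
    have hineq : ∀ n, μs n * ps n (u - xb) ≤ μs n * (d - c) + μs n * εs n := by
      intro n
      have h1 := hreal n
      nlinarith [hμs n]
    have hlim1 : Tendsto (fun n => μs n * ps n (u - xb)) atTop (nhds (p (u - xb))) :=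
      hweak (u - xb)
    have hlim2 : Tendsto (fun n => μs n * (d - c) + μs n * εs n) atTop
        (nhds (μ * (d - c) + δ)) :=
      ((hμlim.mul tendsto_const_nhds).add hμε)
    have hfin : p (u - xb) ≤ μ * (d - c) + δ :=
      le_of_tendsto_of_tendsto' hlim1 hlim2 hineq
    rw [hxb, hsu]
    rw [← EReal.coe_add, ← EReal.coe_add, EReal.coe_le_coe_iff]
    nlinarith
end

section
/- Let X be a real Banach space and Φ : X → ℝ ∪ {+∞} proper, lsc, convex with x̄ ∈ dom Φ. Suppose δ ≥ 0, μ_i ≥ 0, ε_i ≥ 0, λ < ∞, and x_i* ∈ ∂_{ε_i} Φ(x̄) are such that μ_i(λ − Φ(x̄) + ε_i) → δ and μ_i x_i* converges weakly* to x*. Then for every u with Φ(u) ≤ λ one has ⟨x*, u − x̄⟩ ≤ δ; that is, x* belongs to the δ-normal set of the sublevel set [Φ ≤ λ] at x̄. -/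
open Set Topology Filter

section EpsSubgradient

variable {X : Type*} [AddCommGroup X] [TopologicalSpace X] [Module ℝ X]

def IsEpsSubgradient (Φ : X → EReal) (ε : ℝ) (xb : X) (q : X →L[ℝ] ℝ) : Prop :=
  ∀ u, Φ xb + ((q (u - xb) : ℝ) : EReal) ≤ Φ u + ((ε : ℝ) : EReal)

theorem IsEpsSubgradient.apply_sub_le {Φ : X → EReal} {ε : ℝ} {xb u : X} {q : X →L[ℝ] ℝ}
    {c lam : ℝ} (hq : IsEpsSubgradient Φ ε xb q) (hc : Φ xb = c) (hu : Φ u ≤ lam) :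
    q (u - xb) ≤ lam - c + ε := by
  have h : ((c + q (u - xb) : ℝ) : EReal) ≤ ((lam + ε : ℝ) : EReal) := by
    push_cast
    rw [← hc]
    exact (hq u).trans (add_le_add_left hu _)
  linarith [EReal.coe_le_coe_iff.mp h]

end EpsSubgradient

theorem stmt6_general {X : Type*} [NormedAddCommGroup X] [NormedSpace ℝ X]
    (Φ : X → EReal)
    (xb : X) (c : ℝ) (hc : Φ xb = (c : EReal))
    (lam δ : ℝ)
    (p : X →L[ℝ] ℝ) (μs εs : ℕ → ℝ) (ps : ℕ → X →L[ℝ] ℝ)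
    (hμs : ∀ n, 0 ≤ μs n)
    (hsub : ∀ n, ∀ u : X,
      Φ xb + ((ps n (u - xb) : ℝ) : EReal) ≤ Φ u + ((εs n : ℝ) : EReal))
    (hμε : Tendsto (fun n => μs n * (lam - c + εs n)) atTop (nhds δ))
    (hweak : ∀ u : X, Tendsto (fun n => μs n * ps n u) atTop (nhds (p u))) :
    ∀ u : X, Φ u ≤ ((lam : ℝ) : EReal) → p (u - xb) ≤ δ := by
  intro u hu
  have hbound (n : ℕ) : μs n * ps n (u - xb) ≤ μs n * (lam - c + εs n) :=
    mul_le_mul_of_nonneg_left (IsEpsSubgradient.apply_sub_le (hsub n) hc hu) (hμs n)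
  exact le_of_tendsto_of_tendsto' (hweak (u - xb)) hμε hbound

theorem stmt6 {X : Type*} [NormedAddCommGroup X] [NormedSpace ℝ X] [CompleteSpace X]
    (Φ : X → EReal)
    (hproper : ∃ z, Φ z ≠ ⊤) (hbot : ∀ z, Φ z ≠ ⊥)
    (hconv : ∀ x y : X, ∀ t : ℝ, 0 ≤ t → t ≤ 1 →
      Φ (t • x + (1 - t) • y) ≤ ((t : ℝ) : EReal) * Φ x + (((1 - t : ℝ)) : EReal) * Φ y)
    (hlsc : LowerSemicontinuous Φ)
    (xb : X) (c : ℝ) (hc : Φ xb = (c : EReal))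
    (lam δ : ℝ) (hδ : 0 ≤ δ) (hclam : c ≤ lam)
    (p : X →L[ℝ] ℝ) (μs εs : ℕ → ℝ) (ps : ℕ → X →L[ℝ] ℝ)
    (hμs : ∀ n, 0 ≤ μs n) (hεs : ∀ n, 0 ≤ εs n)
    (hsub : ∀ n, ∀ u : X,
      Φ xb + ((ps n (u - xb) : ℝ) : EReal) ≤ Φ u + ((εs n : ℝ) : EReal))
    (hμε : Tendsto (fun n => μs n * (lam - c + εs n)) atTop (nhds δ))
    (hweak : ∀ u : X, Tendsto (fun n => μs n * ps n u) atTop (nhds (p u))) :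
    ∀ u : X, Φ u ≤ ((lam : ℝ) : EReal) → p (u - xb) ≤ δ :=
  stmt6_general Φ xb c hc lam δ p μs εs ps hμs hsub hμε hweak
end

section
/- Let f : ℝⁿ → ℝ ∪ {+∞} be a proper, lsc, convex symmetric function (invariant under permutations of coordinates), and let F := f ∘ λ on the space Sⁿ of n×n real symmetric matrices, where λ(A) is the vector of eigenvalues of A in non-increasing order. Then the Fenchel conjugate satisfies (f ∘ λ)* = f* ∘ λ, where the conjugate of F is taken with respect to the trace inner product ⟨X, Y⟩ = tr(XY) on Sⁿ. -/
open Set Topology Filter Matrix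

/-- The eigenvalues of a real symmetric matrix arranged in non-increasing order. -/
noncomputable def eigVec {n : ℕ} (A : Matrix (Fin n) (Fin n) ℝ) (hA : A.IsHermitian) :
    Fin n → ℝ :=
  fun i => (hA.eigenvalues ∘ (Tuple.sort hA.eigenvalues)) i.rev

/-!
The two suprema are compared term by term. Writing `A = U diag(λ A) Uᵀ` and `Y = V diag(λ Y) Vᵀ`
with orthogonal `U`, `V`, one gets `tr (A Y) = λ A ⬝ (S λ Y)` where `S = (Uᵀ V) ⊙ (Uᵀ V)` is
doubly stochastic. By Birkhoff's theorem `S` is a convex combination of permutation matrices, so the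
rearrangement inequality gives von Neumann's trace inequality `tr (A Y) ≤ λ A ⬝ λ Y`. Conversely,
for a vector `y` the matrix `A = V diag(y) Vᵀ` attains `tr (A Y) = y ⬝ λ Y`, and `λ A` is a
permutation of `y`, so `f (λ A) = f y` by symmetry of `f`.
-/

section Rearrangement

variable {R ι : Type*} [Field R] [LinearOrder R] [IsStrictOrderedRing R] [Fintype ι]
  [DecidableEq ι]

theorem Monovary.dotProduct_mulVec_le_of_mem_doublyStochastic {f g : ι → R}
    (hfg : Monovary f g) {S : Matrix ι ι R} (hS : S ∈ doublyStochastic R ι) :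
    f ⬝ᵥ (S *ᵥ g) ≤ f ⬝ᵥ g := by
  rw [← SetLike.mem_coe, doublyStochastic_eq_convexHull_permMatrix] at hS
  refine convexHull_min (t := {S | f ⬝ᵥ (S *ᵥ g) ≤ f ⬝ᵥ g}) ?_ (convex_halfSpace_le ?_ _) hS
  · rintro _ ⟨σ, rfl⟩
    simpa [permMatrix_mulVec, dotProduct] using hfg.sum_mul_comp_perm_le_sum_mul (σ := σ)
  · exact ⟨fun S T => by simp [add_mulVec], fun c S => by simp [smul_mulVec]⟩

end Rearrangement

namespace Matrix

variable {ι : Type*} [Fintype ι]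

theorem hadamard_self_mem_doublyStochastic [DecidableEq ι] {W : Matrix ι ι ℝ}
    (hW : Wᵀ * W = 1) : W ⊙ W ∈ doublyStochastic ℝ ι := by
  have hW' : W * Wᵀ = 1 := mul_eq_one_comm.mp hW
  refine mem_doublyStochastic_iff_sum.mpr ⟨fun i j => mul_self_nonneg _, fun i => ?_, fun j => ?_⟩
  · simpa [mul_apply] using congrFun (congrFun hW' i) i
  · simpa [mul_apply] using congrFun (congrFun hW j) j

theorem trace_diagonal_mul_mul_diagonal_mul_transpose [DecidableEq ι] {R : Type*}
    [CommSemiring R] (a b : ι → R) (W : Matrix ι ι R) :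
    (diagonal a * W * diagonal b * Wᵀ).trace = a ⬝ᵥ ((W ⊙ W) *ᵥ b) := by
  simp only [trace, diag, mul_apply, diagonal_apply, ite_mul, mul_ite, zero_mul, mul_zero,
    Finset.sum_ite_eq, Finset.sum_ite_eq', Finset.mem_univ, if_true, transpose_apply, dotProduct,
    mulVec, hadamard_apply, Finset.mul_sum]
  exact Finset.sum_congr rfl fun i _ => Finset.sum_congr rfl fun j _ => by ring

theorem trace_conj_mul_conj {R : Type*} [CommSemiring R] (U V M N : Matrix ι ι R) :
    (U * M * Uᵀ * (V * N * Vᵀ)).trace = (M * (Uᵀ * V) * N * (Uᵀ * V)ᵀ).trace := by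
  rw [transpose_mul, transpose_transpose]
  simp only [Matrix.mul_assoc]
  rw [trace_mul_comm U]
  simp only [Matrix.mul_assoc]

theorem IsHermitian.eq_mul_diagonal_mul_transpose [DecidableEq ι] {A : Matrix ι ι ℝ}
    (hA : A.IsHermitian) :
    A = hA.eigenvectorUnitary * diagonal hA.eigenvalues *
      (hA.eigenvectorUnitary : Matrix ι ι ℝ)ᵀ := by
  conv_lhs => rw [hA.spectral_theorem, Unitary.conjStarAlgAut_apply]
  simp [star_eq_conjTranspose]

end Matrix

theorem eigVec_antitone {n : ℕ} {A : Matrix (Fin n) (Fin n) ℝ} (hA : A.IsHermitian) :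
    Antitone (eigVec A hA) := fun _ _ hij =>
  Tuple.monotone_sort hA.eigenvalues (Fin.rev_le_rev.mpr hij)

theorem Fin.exists_perm_eq_comp_of_map_univ_eq {n : ℕ} {α : Type*} [LinearOrder α]
    {c e : Fin n → α} (h : Finset.univ.val.map c = Finset.univ.val.map e) :
    ∃ σ : Equiv.Perm (Fin n), c = e ∘ σ := by
  have hce : (List.ofFn c).Perm (List.ofFn e) := by
    simpa [Fin.univ_val_map] using h
  have hsort : c ∘ Tuple.sort c = e ∘ Tuple.sort e := by
    refine List.ofFn_injective (List.Perm.eq_of_sortedLE (Tuple.monotone_sort c).sortedLE_ofFn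
      (Tuple.monotone_sort e).sortedLE_ofFn ?_)
    exact ((Tuple.sort c).ofFn_comp_perm c).trans
      (hce.trans ((Tuple.sort e).ofFn_comp_perm e).symm)
  refine ⟨(Tuple.sort c).symm.trans (Tuple.sort e), funext fun i => ?_⟩
  simpa using congrFun hsort ((Tuple.sort c).symm i)

namespace Matrix.IsHermitian

variable {n : ℕ}

theorem exists_eq_mul_diagonal_eigVec_mul_transpose {A : Matrix (Fin n) (Fin n) ℝ}
    (hA : A.IsHermitian) :
    ∃ U : Matrix (Fin n) (Fin n) ℝ, Uᵀ * U = 1 ∧ A = U * diagonal (eigVec A hA) * Uᵀ := by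
  set U₀ : Matrix (Fin n) (Fin n) ℝ := ↑hA.eigenvectorUnitary
  set σ := Fin.revPerm.trans (Tuple.sort hA.eigenvalues)
  have hU₀ : U₀ᵀ * U₀ = 1 := by
    simpa [U₀, star_eq_conjTranspose] using Unitary.coe_star_mul_self hA.eigenvectorUnitary
  have heig : diagonal (eigVec A hA) = (diagonal hA.eigenvalues).submatrix σ σ :=
    (submatrix_diagonal_equiv _ σ).symm
  refine ⟨U₀.submatrix id σ, ?_, ?_⟩
  · rw [transpose_submatrix, ← submatrix_mul _ _ _ _ _ Function.bijective_id, hU₀,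
      submatrix_one_equiv]
  · rw [heig, transpose_submatrix, submatrix_mul_equiv, submatrix_mul_equiv, submatrix_id_id]
    exact hA.eq_mul_diagonal_mul_transpose

theorem trace_mul_le_eigVec_dotProduct_eigVec {A Y : Matrix (Fin n) (Fin n) ℝ}
    (hA : A.IsHermitian) (hY : Y.IsHermitian) :
    (A * Y).trace ≤ eigVec A hA ⬝ᵥ eigVec Y hY := by
  obtain ⟨U, hU, hAU⟩ := hA.exists_eq_mul_diagonal_eigVec_mul_transpose
  obtain ⟨V, hV, hYV⟩ := hY.exists_eq_mul_diagonal_eigVec_mul_transpose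
  have hW : (Uᵀ * V)ᵀ * (Uᵀ * V) = 1 := by
    rw [transpose_mul, transpose_transpose, Matrix.mul_assoc, ← Matrix.mul_assoc U,
      mul_eq_one_comm.mp hU, Matrix.one_mul, hV]
  calc (A * Y).trace = eigVec A hA ⬝ᵥ (((Uᵀ * V) ⊙ (Uᵀ * V)) *ᵥ eigVec Y hY) := by
        conv_lhs => rw [hAU, hYV]
        rw [trace_conj_mul_conj, trace_diagonal_mul_mul_diagonal_mul_transpose]
    _ ≤ eigVec A hA ⬝ᵥ eigVec Y hY :=
        Monovary.dotProduct_mulVec_le_of_mem_doublyStochastic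
          ((eigVec_antitone hA).monovary (eigVec_antitone hY))
          (hadamard_self_mem_doublyStochastic hW)

theorem exists_eigVec_eq_comp_of_charpoly_eq {A : Matrix (Fin n) (Fin n) ℝ}
    (hA : A.IsHermitian) {y : Fin n → ℝ} (h : A.charpoly = (diagonal y).charpoly) :
    ∃ σ : Equiv.Perm (Fin n), eigVec A hA = y ∘ σ := by
  have hroots := congrArg Polynomial.roots h
  rw [hA.roots_charpoly_eq_eigenvalues, charpoly_diagonal, Polynomial.roots_prod _ _
    (by simp [Finset.prod_ne_zero_iff, Polynomial.X_sub_C_ne_zero])] at hroots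
  obtain ⟨σ, hσ⟩ := Fin.exists_perm_eq_comp_of_map_univ_eq (c := hA.eigenvalues) (e := y)
    (by simpa using hroots)
  exact ⟨(Fin.revPerm.trans (Tuple.sort hA.eigenvalues)).trans σ, by funext i; simp [eigVec, hσ]⟩

theorem exists_trace_mul_eq_dotProduct_eigVec {Y : Matrix (Fin n) (Fin n) ℝ}
    (hY : Y.IsHermitian) (y : Fin n → ℝ) :
    ∃ (A : Matrix (Fin n) (Fin n) ℝ) (hA : A.IsHermitian),
      (A * Y).trace = y ⬝ᵥ eigVec Y hY ∧ ∃ σ : Equiv.Perm (Fin n), eigVec A hA = y ∘ σ := by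
  obtain ⟨V, hV, hYV⟩ := hY.exists_eq_mul_diagonal_eigVec_mul_transpose
  have hA : (V * diagonal y * Vᵀ).IsHermitian := by
    simpa [conjTranspose_eq_transpose_of_trivial] using
      isHermitian_mul_mul_conjTranspose V (isHermitian_diagonal y)
  refine ⟨_, hA, ?_, hA.exists_eigVec_eq_comp_of_charpoly_eq ?_⟩
  · conv_lhs => rw [hYV]
    simp [trace_conj_mul_conj, hV, diagonal_mul_diagonal, trace_diagonal, dotProduct]
  · rw [charpoly_mul_comm, ← Matrix.mul_assoc, hV, Matrix.one_mul]

end Matrix.IsHermitian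

theorem stmt9_general (n : ℕ) (f : (Fin n → ℝ) → EReal)
    (hsymm : ∀ σ : Equiv.Perm (Fin n), ∀ x : Fin n → ℝ, f (x ∘ σ) = f x)
    (Y : Matrix (Fin n) (Fin n) ℝ) (hY : Y.IsHermitian) :
    (⨆ (A : Matrix (Fin n) (Fin n) ℝ) (hA : A.IsHermitian),
        ((((A * Y).trace : ℝ) : EReal) - f (eigVec A hA))) =
      ⨆ y : Fin n → ℝ, (((∑ i, y i * eigVec Y hY i : ℝ) : EReal) - f y) := by
  refine le_antisymm (iSup₂_le fun A hA => ?_) (iSup_le fun y => ?_)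
  · refine le_trans ?_ (le_iSup _ (eigVec A hA))
    exact EReal.sub_le_sub
      (EReal.coe_le_coe_iff.mpr (hA.trace_mul_le_eigVec_dotProduct_eigVec hY)) le_rfl
  · obtain ⟨A, hA, htrace, σ, hσ⟩ := hY.exists_trace_mul_eq_dotProduct_eigVec y
    refine le_trans (le_of_eq ?_) (le_iSup₂ A hA)
    rw [htrace, hσ, hsymm]
    rfl

theorem stmt9 (n : ℕ) (f : (Fin n → ℝ) → EReal)
    (hproper : ∃ z, f z ≠ ⊤) (hbot : ∀ z, f z ≠ ⊥)
    (hconv : ∀ x y : Fin n → ℝ, ∀ t : ℝ, 0 ≤ t → t ≤ 1 →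
      f (t • x + (1 - t) • y) ≤ ((t : ℝ) : EReal) * f x + (((1 - t : ℝ)) : EReal) * f y)
    (hlsc : LowerSemicontinuous f)
    (hsymm : ∀ σ : Equiv.Perm (Fin n), ∀ x : Fin n → ℝ, f (x ∘ σ) = f x)
    (Y : Matrix (Fin n) (Fin n) ℝ) (hY : Y.IsHermitian) :
    (⨆ (A : Matrix (Fin n) (Fin n) ℝ) (hA : A.IsHermitian),
        ((((A * Y).trace : ℝ) : EReal) - f (eigVec A hA))) =
      ⨆ y : Fin n → ℝ, (((∑ i, y i * eigVec Y hY i : ℝ) : EReal) - f y) :=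
  stmt9_general n f hsymm Y hY
end

section
/- Let X be a real Banach space and Φ : X → ℝ ∪ {+∞} proper, lsc, convex, x̄ ∈ dom Φ, v ∈ X. Define S : ℝ ⇉ ℝ by S(ε) = ∅ for ε < 0 and, for ε ≥ 0, S(ε) := {−lim_n 1/t_n : t_n > 0, lim_n (Φ(x̄ + t_n v) − Φ(x̄) + ε)/t_n = Φ'_ε(x̄; v)} (allowing t_n → +∞ with 1/t_n → 0), where Φ'_ε(x̄; v) := inf_{t>0}(Φ(x̄+tv) − Φ(x̄) + ε)/t. Then S is a monotone operator: for all (ε₀, s₀), (ε₁, s₁) in the graph of S, (ε₀ − ε₁)(s₀ − s₁) ≥ 0. -/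
open Set Topology Filter

/-- `S(ε)`: the set of limits `−lim 1/tₙ` over sequences `tₙ > 0` along which the
difference quotient `(Φ(x̄+tₙv) − Φ(x̄) + ε)/tₙ` tends to `Φ'_ε(x̄;v)`. -/
def slopeSet {X : Type*} [NormedAddCommGroup X] [NormedSpace ℝ X]
    (Φ : X → EReal) (x v : X) (c : ℝ) (ε : ℝ) : Set ℝ :=
  {s | ∃ t : ℕ → ℝ, (∀ n, 0 < t n) ∧
    Tendsto (fun n => -(t n)⁻¹) atTop (nhds s) ∧
    Tendsto (fun n => (((t n)⁻¹ : ℝ) : EReal) * Φ (x + t n • v) +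
      (((ε - c) / (t n) : ℝ) : EReal)) atTop (nhds (dirDeriv Φ x v c ε))}

/-- Key estimate: if `s ∈ S(ε)`, then for any `ε'`,
`Φ'_{ε'} ≤ Φ'_ε + (ε' − ε)·(−s)`. -/
lemma dirDeriv_le_of_slope {X : Type*} [NormedAddCommGroup X] [NormedSpace ℝ X]
    (Φ : X → EReal) (x v : X) (c ε ε' s : ℝ) (hs : s ∈ slopeSet Φ x v c ε) :
    dirDeriv Φ x v c ε' ≤ dirDeriv Φ x v c ε + (((ε' - ε) * (-s) : ℝ) : EReal) := by
  obtain ⟨t, htpos, hts, htd⟩ := hs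
  -- the real correction terms converge
  have hinv : Tendsto (fun n => (t n)⁻¹) atTop (nhds (-s)) := by
    simpa using hts.neg
  have hr : Tendsto (fun n => ((ε' - ε) / t n : ℝ)) atTop (nhds ((ε' - ε) * (-s))) := by
    simpa [div_eq_mul_inv] using hinv.const_mul (ε' - ε)
  have hrE : Tendsto (fun n => (((ε' - ε) / t n : ℝ) : EReal)) atTop
      (nhds (((ε' - ε) * (-s) : ℝ) : EReal)) :=
    (continuous_coe_real_ereal.tendsto _).comp hr
  -- the sum converges to `dirDeriv ε + (ε'-ε)(−s)`
  have hadd : ContinuousAt (fun p : EReal × EReal => p.1 + p.2)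
      (dirDeriv Φ x v c ε, (((ε' - ε) * (-s) : ℝ) : EReal)) := by
    apply EReal.continuousAt_add
    · exact Or.inr (EReal.coe_ne_bot _)
    · exact Or.inr (EReal.coe_ne_top _)
  have hsum : Tendsto (fun n => ((((t n)⁻¹ : ℝ) : EReal) * Φ (x + t n • v) +
      (((ε - c) / (t n) : ℝ) : EReal)) + (((ε' - ε) / t n : ℝ) : EReal)) atTop
      (nhds (dirDeriv Φ x v c ε + (((ε' - ε) * (-s) : ℝ) : EReal))) :=
    hadd.tendsto.comp (htd.prodMk_nhds hrE)
  refine ge_of_tendsto' hsum (fun n => ?_)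
  have key : ((((t n)⁻¹ : ℝ) : EReal) * Φ (x + t n • v) +
      (((ε - c) / (t n) : ℝ) : EReal)) + (((ε' - ε) / t n : ℝ) : EReal)
      = (((t n)⁻¹ : ℝ) : EReal) * Φ (x + t n • v) + (((ε' - c) / (t n) : ℝ) : EReal) := by
    rw [add_assoc, ← EReal.coe_add]
    congr 2
    ring
  rw [key]
  exact iInf₂_le (t n) (htpos n)

theorem stmt12 {X : Type*} [NormedAddCommGroup X] [NormedSpace ℝ X] [CompleteSpace X]
    (Φ : X → EReal)
    (hproper : ∃ z, Φ z ≠ ⊤) (hbot : ∀ z, Φ z ≠ ⊥)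
    (hconv : ∀ x y : X, ∀ t : ℝ, 0 ≤ t → t ≤ 1 →
      Φ (t • x + (1 - t) • y) ≤ ((t : ℝ) : EReal) * Φ x + (((1 - t : ℝ)) : EReal) * Φ y)
    (hlsc : LowerSemicontinuous Φ)
    (xb v : X) (c : ℝ) (hc : Φ xb = (c : EReal))
    (hfin : ∀ ε : ℝ, 0 < ε → dirDeriv Φ xb v c ε ≠ ⊤ ∧ dirDeriv Φ xb v c ε ≠ ⊥) :
    ∀ ε₀ ε₁ s₀ s₁ : ℝ, 0 ≤ ε₀ → 0 ≤ ε₁ →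
      s₀ ∈ slopeSet Φ xb v c ε₀ → s₁ ∈ slopeSet Φ xb v c ε₁ →
      0 ≤ (ε₀ - ε₁) * (s₀ - s₁) := by
  -- main work: whenever ε₁ < ε₀ we get the inequality
  have main : ∀ ε₀ ε₁ s₀ s₁ : ℝ, 0 ≤ ε₁ → ε₁ < ε₀ →
      s₀ ∈ slopeSet Φ xb v c ε₀ → s₁ ∈ slopeSet Φ xb v c ε₁ →
      0 ≤ (ε₀ - ε₁) * (s₀ - s₁) := by
    intro ε₀ ε₁ s₀ s₁ hε₁ hlt h₀ h₁
    obtain ⟨hne_top, hne_bot⟩ := hfin ε₀ (lt_of_le_of_lt hε₁ hlt)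
    obtain ⟨d₀, hd₀⟩ : ∃ d₀ : ℝ, dirDeriv Φ xb v c ε₀ = (d₀ : EReal) := by
      lift dirDeriv Φ xb v c ε₀ to ℝ using ⟨hne_top, hne_bot⟩ with d₀
      exact ⟨d₀, rfl⟩
    have h01 := dirDeriv_le_of_slope Φ xb v c ε₁ ε₀ s₁ h₁
    have h10 := dirDeriv_le_of_slope Φ xb v c ε₀ ε₁ s₀ h₀
    rw [hd₀] at h01 h10
    -- D ε₁ is neither ⊥ nor ⊤
    have hne_bot1 : dirDeriv Φ xb v c ε₁ ≠ ⊥ := by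
      intro h
      rw [h, EReal.bot_add] at h01
      exact (EReal.coe_ne_bot d₀) (le_bot_iff.mp h01)
    have hne_top1 : dirDeriv Φ xb v c ε₁ ≠ ⊤ := by
      intro h
      rw [h, ← EReal.coe_add] at h10
      exact (EReal.coe_ne_top _) (top_le_iff.mp h10)
    obtain ⟨d₁, hd₁⟩ : ∃ d₁ : ℝ, dirDeriv Φ xb v c ε₁ = (d₁ : EReal) := by
      lift dirDeriv Φ xb v c ε₁ to ℝ using ⟨hne_top1, hne_bot1⟩ with d₁
      exact ⟨d₁, rfl⟩
    rw [hd₁, ← EReal.coe_add] at h01 h10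
    have H01 : d₀ ≤ d₁ + (ε₀ - ε₁) * (-s₁) := EReal.coe_le_coe_iff.mp h01
    have H10 : d₁ ≤ d₀ + (ε₁ - ε₀) * (-s₀) := EReal.coe_le_coe_iff.mp h10
    nlinarith [H01, H10]
  intro ε₀ ε₁ s₀ s₁ hε₀ hε₁ h₀ h₁
  rcases lt_trichotomy ε₁ ε₀ with h | h | h
  · exact main ε₀ ε₁ s₀ s₁ hε₁ h h₀ h₁
  · simp [h]
  · have := main ε₁ ε₀ s₁ s₀ hε₀ h h₁ h₀
    nlinarith [this]
end

section
/- Let X be a real Banach space and Φ : X → ℝ ∪ {+∞} proper, lsc, convex, with x̄ ∈ dom Φ and δ ≥ 0. If x* belongs to the δ-normal set of dom Φ at x̄, i.e. ⟨x*, u − x̄⟩ ≤ δ for all u ∈ dom Φ, then for every weak* neighborhood V of 0 in X* and every η > 0 there exist μ ∈ (0, η), ε ≥ 0, and y* ∈ ∂_ε Φ(x̄) with |με − δ| < η and x* − μ y* ∈ V. Consequently N^δ_{dom Φ}(x̄) ⊆ limsup_{με→δ, ε≥0, μ↓0} μ ∂_ε Φ(x̄) (weak* upper limit). -/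
open Set Topology Filter

set_option maxHeartbeats 1000000 in
theorem stmt14 {X : Type*} [NormedAddCommGroup X] [NormedSpace ℝ X] [CompleteSpace X]
    (Φ : X → EReal)
    (hproper : ∃ z, Φ z ≠ ⊤) (hbot : ∀ z, Φ z ≠ ⊥)
    (hconv : ∀ x y : X, ∀ t : ℝ, 0 ≤ t → t ≤ 1 →
      Φ (t • x + (1 - t) • y) ≤ ((t : ℝ) : EReal) * Φ x + (((1 - t : ℝ)) : EReal) * Φ y)
    (hlsc : LowerSemicontinuous Φ)
    (xb : X) (c : ℝ) (hc : Φ xb = (c : EReal))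
    (δ : ℝ) (hδ : 0 ≤ δ)
    (p : WeakDual ℝ X)
    (hp : ∀ u : X, Φ u ≠ ⊤ → p (u - xb) ≤ δ) :
    ∀ V ∈ nhds (0 : WeakDual ℝ X), ∀ η : ℝ, 0 < η →
      ∃ μ : ℝ, μ ∈ Set.Ioo 0 η ∧ ∃ ε : ℝ, 0 ≤ ε ∧ ∃ q : WeakDual ℝ X,
        (∀ u : X, Φ xb + ((q (u - xb) : ℝ) : EReal) ≤ Φ u + ((ε : ℝ) : EReal)) ∧
        |μ * ε - δ| < η ∧ p - μ • q ∈ V := by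
  intro V hV η hη
  -- The epigraph of Φ in X × ℝ
  set S : Set (X × ℝ) := {q | Φ q.1 ≤ ((q.2 : ℝ) : EReal)} with hSdef
  have hSclosed : IsClosed S := by
    have h1 : IsClosed {q : X × EReal | Φ q.1 ≤ q.2} := hlsc.isClosed_epigraph
    have h2 : S = (fun q : X × ℝ => (q.1, ((q.2 : ℝ) : EReal))) ⁻¹'
        {q : X × EReal | Φ q.1 ≤ q.2} := rfl
    rw [h2]
    exact h1.preimage (continuous_fst.prodMk (continuous_coe_real_ereal.comp continuous_snd))
  have hSconv : Convex ℝ S := by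
    rintro ⟨u1, r1⟩ h1 ⟨u2, r2⟩ h2 t s ht hs hts
    simp only [hSdef, mem_setOf_eq] at h1 h2 ⊢
    have hne1 : Φ u1 ≠ ⊤ := fun h => by simp [h] at h1
    have hne2 : Φ u2 ≠ ⊤ := fun h => by simp [h] at h2
    set a1 := (Φ u1).toReal with ha1
    set a2 := (Φ u2).toReal with ha2
    have he1 : Φ u1 = (a1 : EReal) := (EReal.coe_toReal hne1 (hbot u1)).symm
    have he2 : Φ u2 = (a2 : EReal) := (EReal.coe_toReal hne2 (hbot u2)).symm
    have hle1 : a1 ≤ r1 := by rwa [he1, EReal.coe_le_coe_iff] at h1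
    have hle2 : a2 ≤ r2 := by rwa [he2, EReal.coe_le_coe_iff] at h2
    have hs' : s = 1 - t := by linarith
    subst hs'
    have hkey := hconv u1 u2 t ht (by linarith)
    rw [he1, he2, ← EReal.coe_mul, ← EReal.coe_mul, ← EReal.coe_add] at hkey
    simp only [Prod.smul_mk, Prod.mk_add_mk, smul_eq_mul]
    refine le_trans hkey ?_
    rw [EReal.coe_le_coe_iff]
    have hA : t * a1 ≤ t * r1 := mul_le_mul_of_nonneg_left hle1 ht
    have hB : (1 - t) * a2 ≤ (1 - t) * r2 := mul_le_mul_of_nonneg_left hle2 hs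
    linarith
  -- separate the point (xb, c-1) from S
  have hpt : (xb, c - 1) ∉ S := by
    simp only [hSdef, mem_setOf_eq, hc, EReal.coe_le_coe_iff]
    linarith
  obtain ⟨f, u0, hfS, hfu0⟩ := geometric_hahn_banach_closed_point hSconv hSclosed hpt
  -- decompose f
  set g : X →L[ℝ] ℝ := f.comp (ContinuousLinearMap.inl ℝ X ℝ) with hgdef
  set a : ℝ := f (0, 1) with hadef
  have hf_eq : ∀ (x : X) (r : ℝ), f (x, r) = g x + r * a := by
    intro x r
    have : (x, r) = (x, (0 : ℝ)) + r • ((0 : X), (1 : ℝ)) := by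
      simp [Prod.ext_iff]
    rw [this, map_add, map_smul]
    simp only [hgdef, hadef, smul_eq_mul, ContinuousLinearMap.comp_apply,
      ContinuousLinearMap.inl_apply]
  -- a < 0
  have hxbc : (xb, c) ∈ S := by simp [hSdef, hc]
  have ha_neg : a < 0 := by
    have h1 : f (xb, c) < u0 := hfS _ hxbc
    have h2 : u0 < f (xb, c - 1) := hfu0
    rw [hf_eq] at h1 h2
    nlinarith
  -- affine minorant: b0 + y0 v ≤ Φ v
  set y0 : X →L[ℝ] ℝ := (-a⁻¹) • g with hy0def
  set b0 : ℝ := u0 / a with hb0def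
  have hminor : ∀ v : X, Φ v ≠ ⊤ → b0 + y0 v ≤ (Φ v).toReal := by
    intro v hv
    have hev : Φ v = (((Φ v).toReal : ℝ) : EReal) := (EReal.coe_toReal hv (hbot v)).symm
    have hmem : (v, (Φ v).toReal) ∈ S := by
      simp only [hSdef, mem_setOf_eq]
      exact le_of_eq hev
    have := hfS _ hmem
    rw [hf_eq] at this
    have hy0v : y0 v = -a⁻¹ * g v := by simp [hy0def]
    rw [hy0v, hb0def]
    have ha' : a ≠ 0 := ne_of_lt ha_neg
    have h5 : u0 / a + -a⁻¹ * g v = (u0 - g v) / a := by field_simp; ring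
    rw [h5]
    have h6 : (u0 - g v) / a < (Φ v).toReal := by
      rw [div_lt_iff_of_neg ha_neg]
      linarith
    linarith
  -- ε₀
  set ε₀ : ℝ := c - (b0 + y0 xb) with hε₀def
  have hε₀ : 0 ≤ ε₀ := by
    have := hminor xb (by rw [hc]; exact EReal.coe_ne_top c)
    rw [hc] at this
    simp only [EReal.toReal_coe] at this
    simp only [hε₀def]
    linarith
  -- y0 as a weak dual element
  set y0' : WeakDual ℝ X := StrongDual.toWeakDual y0 with hy0'def
  have hy0'app : ∀ v, y0' v = y0 v := fun v => rfl
  -- continuity of t ↦ (-t) • y0'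
  have hcont : Continuous fun t : ℝ => (-t) • y0' :=
    (continuous_neg).smul continuous_const
  have h0V : ((-(0:ℝ)) • y0' : WeakDual ℝ X) ∈ V := by simpa using mem_of_mem_nhds hV
  have hpre : (fun t : ℝ => (-t) • y0') ⁻¹' V ∈ 𝓝 (0 : ℝ) :=
    hcont.continuousAt.preimage_mem_nhds (by simpa using hV)
  obtain ⟨ι, hι, hball⟩ := Metric.mem_nhds_iff.mp hpre
  -- choose μ
  set μ : ℝ := min (η / 2) (min (ι / 2) (η / (2 * (ε₀ + 1)))) with hμdef
  have hμpos : 0 < μ := by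
    refine lt_min (by linarith) (lt_min (by linarith) ?_)
    positivity
  have hμη : μ < η := lt_of_le_of_lt (min_le_left _ _) (by linarith)
  have hμι : μ < ι := lt_of_le_of_lt ((min_le_right _ _).trans (min_le_left _ _)) (by linarith)
  have hμε₀ : μ * ε₀ < η := by
    have h1 : μ ≤ η / (2 * (ε₀ + 1)) := (min_le_right _ _).trans (min_le_right _ _)
    have h2 : μ * ε₀ ≤ (η / (2 * (ε₀ + 1))) * ε₀ := mul_le_mul_of_nonneg_right h1 hε₀
    have h3 : (η / (2 * (ε₀ + 1))) * ε₀ < η := by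
      rw [div_mul_eq_mul_div, div_lt_iff₀ (by positivity)]
      nlinarith
    exact lt_of_le_of_lt h2 h3
  refine ⟨μ, ⟨hμpos, hμη⟩, ε₀ + δ / μ, by positivity, y0' + μ⁻¹ • p, ?_, ?_, ?_⟩
  · -- subgradient inequality
    intro u
    have hqapp : (y0' + μ⁻¹ • p) (u - xb) = y0 (u - xb) + μ⁻¹ * p (u - xb) := rfl
    by_cases hu : Φ u = ⊤
    · rw [hu]
      rw [EReal.top_add_of_ne_bot (EReal.coe_ne_bot _)]
      exact le_top
    · have hev : Φ u = (((Φ u).toReal : ℝ) : EReal) := (EReal.coe_toReal hu (hbot u)).symm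
      set r : ℝ := (Φ u).toReal with hrdef
      rw [hc, hev, ← EReal.coe_add, ← EReal.coe_add, EReal.coe_le_coe_iff, hqapp]
      have hm : b0 + y0 u ≤ r := hminor u hu
      have hpu : p (u - xb) ≤ δ := hp u hu
      have hpu' : μ⁻¹ * p (u - xb) ≤ μ⁻¹ * δ :=
        mul_le_mul_of_nonneg_left hpu (by positivity)
      have hy0sub : y0 (u - xb) = y0 u - y0 xb := map_sub y0 u xb
      have hδμ : μ⁻¹ * δ = δ / μ := by rw [div_eq_inv_mul, mul_comm]
      rw [hy0sub]
      simp only [hε₀def]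
      linarith [hδμ ▸ hpu']
  · -- |μ * ε - δ| < η
    have hcalc : μ * (ε₀ + δ / μ) - δ = μ * ε₀ := by
      field_simp
      ring
    rw [hcalc, abs_of_nonneg (mul_nonneg hμpos.le hε₀)]
    exact hμε₀
  · -- p - μ • q ∈ V
    have hkey : p - μ • (y0' + μ⁻¹ • p) = (-μ) • y0' := by
      rw [smul_add, smul_smul, mul_inv_cancel₀ hμpos.ne', one_smul, neg_smul]
      abel
    rw [hkey]
    exact hball (by simp [abs_of_pos hμpos, hμι])
end

section
/- Let X be a real Banach space, Φ : X → ℝ ∪ {+∞} proper, lsc, convex, x̄ ∈ dom Φ. Suppose (x_n) ⊂ X, μ_n ≥ 0, x_n* ∈ ∂Φ(x_n) satisfy μ_n(Φ(x_n) − Φ(x̄)) → 0, ⟨μ_n x_n*, x_n − x̄⟩ → 0, and μ_n x_n* ⇀ x* weakly*. Then x* ∈ N_{[Φ ≤ Φ(x̄)]}(x̄), i.e., ⟨x*, y − x̄⟩ ≤ 0 for every y with Φ(y) ≤ Φ(x̄). -/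
/-!
Since `Φ y ≤ Φ x̄`, the subgradient inequality at `xₙ` tested at `y` gives
`μₙ xₙ*(y - x̄) ≤ μₙ (Φ x̄ - Φ xₙ) + μₙ xₙ*(xₙ - x̄)`, and both terms on the right tend to zero.
-/

open Set Topology Filter

section Subgradient

variable {X : Type*} [AddCommGroup X] [TopologicalSpace X] [Module ℝ X]
  {Φ : X → EReal} {p : X →L[ℝ] ℝ} {x : X}

theorem exists_eq_coe_of_subgradient (hbot : Φ x ≠ ⊥)
    (hsub : ∀ u, Φ x + (p (u - x) : EReal) ≤ Φ u) {z : X} {c : ℝ} (hz : Φ z = c) :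
    ∃ a : ℝ, Φ x = a := by
  have htop : Φ x ≠ ⊤ := by
    intro h
    have := hsub z
    rw [h, hz, EReal.top_add_coe, top_le_iff] at this
    exact EReal.coe_ne_top c this
  exact ⟨(Φ x).toReal, (EReal.coe_toReal htop hbot).symm⟩

theorem subgradient_apply_sub_le {a c : ℝ} (hx : Φ x = a)
    (hsub : ∀ u, Φ x + (p (u - x) : EReal) ≤ Φ u) {xb y : X} (hy : Φ y ≤ c) :
    p (y - xb) ≤ (c - a) + p (x - xb) := by
  have h : a + p (y - x) ≤ c := by
    have := (hsub y).trans hy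
    rwa [hx, ← EReal.coe_add, EReal.coe_le_coe_iff] at this
  have hsplit : p (y - x) = p (y - xb) - p (x - xb) := by
    rw [← map_sub, sub_sub_sub_cancel_right]
  linarith

end Subgradient

theorem stmt16_general {X : Type*} [NormedAddCommGroup X] [NormedSpace ℝ X]
    (Φ : X → EReal)
    (hbot : ∀ z, Φ z ≠ ⊥)
    (xb : X) (c : ℝ) (hc : Φ xb = (c : EReal))
    (xs : ℕ → X) (μs : ℕ → ℝ) (hμs : ∀ n, 0 ≤ μs n)
    (ps : ℕ → X →L[ℝ] ℝ)
    (hsub : ∀ n, ∀ u : X, Φ (xs n) + ((ps n (u - xs n) : ℝ) : EReal) ≤ Φ u)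
    (hval : Tendsto (fun n => ((μs n : ℝ) : EReal) * (Φ (xs n) - Φ xb)) atTop
      (nhds (0 : EReal)))
    (hpair : Tendsto (fun n => μs n * ps n (xs n - xb)) atTop (nhds (0 : ℝ)))
    (p : X →L[ℝ] ℝ)
    (hweak : ∀ u : X, Tendsto (fun n => μs n * ps n u) atTop (nhds (p u))) :
    ∀ y : X, Φ y ≤ Φ xb → p (y - xb) ≤ 0 := by
  intro y hy
  choose a ha using fun n => exists_eq_coe_of_subgradient (hbot (xs n)) (hsub n) hc
  have hval' : Tendsto (fun n => μs n * (c - a n)) atTop (𝓝 0) := by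
    have : Tendsto (fun n => μs n * (a n - c)) atTop (𝓝 0) := by
      rw [← EReal.tendsto_coe]
      simpa only [ha, hc, EReal.coe_mul, EReal.coe_sub, EReal.coe_zero] using hval
    simpa only [← mul_neg, neg_sub, neg_zero] using this.neg
  have hkey : ∀ n, μs n * ps n (y - xb) ≤ μs n * (c - a n) + μs n * ps n (xs n - xb) :=
    fun n => by
      rw [← mul_add]
      exact mul_le_mul_of_nonneg_left
        (subgradient_apply_sub_le (ha n) (hsub n) (hc ▸ hy)) (hμs n)
  simpa using le_of_tendsto_of_tendsto' (hweak (y - xb)) (hval'.add hpair) hkey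

theorem stmt16 {X : Type*} [NormedAddCommGroup X] [NormedSpace ℝ X] [CompleteSpace X]
    (Φ : X → EReal)
    (hproper : ∃ z, Φ z ≠ ⊤) (hbot : ∀ z, Φ z ≠ ⊥)
    (hconv : ∀ x y : X, ∀ t : ℝ, 0 ≤ t → t ≤ 1 →
      Φ (t • x + (1 - t) • y) ≤ ((t : ℝ) : EReal) * Φ x + (((1 - t : ℝ)) : EReal) * Φ y)
    (hlsc : LowerSemicontinuous Φ)
    (xb : X) (c : ℝ) (hc : Φ xb = (c : EReal))
    (xs : ℕ → X) (μs : ℕ → ℝ) (hμs : ∀ n, 0 ≤ μs n)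
    (ps : ℕ → X →L[ℝ] ℝ)
    (hsub : ∀ n, ∀ u : X, Φ (xs n) + ((ps n (u - xs n) : ℝ) : EReal) ≤ Φ u)
    (hval : Tendsto (fun n => ((μs n : ℝ) : EReal) * (Φ (xs n) - Φ xb)) atTop
      (nhds (0 : EReal)))
    (hpair : Tendsto (fun n => μs n * ps n (xs n - xb)) atTop (nhds (0 : ℝ)))
    (p : X →L[ℝ] ℝ)
    (hweak : ∀ u : X, Tendsto (fun n => μs n * ps n u) atTop (nhds (p u))) :
    ∀ y : X, Φ y ≤ Φ xb → p (y - xb) ≤ 0 :=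
  stmt16_general Φ hbot xb c hc xs μs hμs ps hsub hval hpair p hweak
end
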